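/- arXiv:1207.0489 — 3 statements merged into one kernel-verified Lean document; each statement's English description precedes it below -/
import Mathlib

section
/- Jensen's inequality for conditional sublinear expectations: for any convex function φ: ℝ → ℝ and any t, if X and φ(X) are both in H, then E_t(φ(X)) ≥ φ(E_t(X)). -/
open MeasureTheory Filter Set

/-- An `F_t`-consistent sublinear expectation (`SL`-expectation) in discrete time:
a filtration `F t` of sub-σ-algebras, a space `H` of measurable real functions closed
under constants, `|·|`, addition, scalar multiplication and multiplication by indicators,
and conditional expectations `Et t : H → H ∩ mF_t` satisfying monotonicity, the tower
property, locality, projection, sub-additivity, positive homogeneity and the monotone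
continuity (Fatou) property.  `E := Et 0` is identified with a real-valued functional. -/
structure CondSLExp (Ω : Type*) [m : MeasurableSpace Ω] where
  F : ℕ → MeasurableSpace Ω
  F_le : ∀ t, F t ≤ m
  F_mono : Monotone F
  H : Set (Ω → ℝ)
  H_meas : ∀ X ∈ H, Measurable X
  const_mem : ∀ c : ℝ, (fun _ => c) ∈ H
  abs_mem : ∀ X ∈ H, (fun ω => |X ω|) ∈ H
  add_mem : ∀ X ∈ H, ∀ Y ∈ H, X + Y ∈ H
  smul_mem : ∀ (c : ℝ), ∀ X ∈ H, c • X ∈ H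
  indmul_mem : ∀ (A : Set Ω), MeasurableSet A → ∀ X ∈ H, A.indicator X ∈ H
  Et : ℕ → (Ω → ℝ) → (Ω → ℝ)
  E : (Ω → ℝ) → ℝ
  E0_eq : ∀ X ∈ H, ∀ ω, Et 0 X ω = E X
  Et_mem : ∀ t, ∀ X ∈ H, Et t X ∈ H
  Et_meas : ∀ t, ∀ X ∈ H, Measurable[F t] (Et t X)
  mono : ∀ t, ∀ X ∈ H, ∀ Y ∈ H, (∀ ω, X ω ≤ Y ω) → ∀ ω, Et t X ω ≤ Et t Y ω
  tower : ∀ s t : ℕ, s ≤ t → ∀ Y ∈ H, Et s (Et t Y) = Et s Y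
  locality : ∀ (t : ℕ) (A : Set Ω), MeasurableSet[F t] A → ∀ Y ∈ H,
      Et t (A.indicator Y) = A.indicator (Et t Y)
  proj : ∀ t, ∀ Y ∈ H, Measurable[F t] Y → Et t Y = Y
  subadd : ∀ t, ∀ X ∈ H, ∀ Y ∈ H, ∀ ω, Et t (X + Y) ω ≤ Et t X ω + Et t Y ω
  poshom : ∀ (t : ℕ) (lam : Ω → ℝ), lam ∈ H → Measurable[F t] lam → ∀ Y ∈ H,
      (fun ω => lam ω * Y ω) ∈ H →
      ∀ ω, Et t (fun ω' => lam ω' * Y ω') ω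
        = max (lam ω) 0 * Et t Y ω + max (-(lam ω)) 0 * Et t (fun ω' => -(Y ω')) ω
  fatou : ∀ X : ℕ → Ω → ℝ, (∀ i, X i ∈ H) → (∀ ω, Antitone fun i => X i ω) →
      (∀ ω, Tendsto (fun i => X i ω) atTop (nhds 0)) →
      Tendsto (fun i => E (X i)) atTop (nhds 0)

variable {Ω : Type*} [MeasurableSpace Ω]

/-- The upper capacity `V(A) := E(I_A)`. -/
noncomputable def CondSLExp.V (S : CondSLExp Ω) (A : Set Ω) : ℝ :=
  S.E (A.indicator fun _ => (1 : ℝ))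

/-- A property holds quasi-surely if it holds outside a set `N` with `E(I_N) = 0`. -/
def CondSLExp.QS (S : CondSLExp Ω) (P : Ω → Prop) : Prop :=
  ∃ N : Set Ω, S.V N = 0 ∧ ∀ ω ∉ N, P ω

/-- `X` is independent of `F n`: `X` is independent of `I_A` under `E` for every
`A ∈ F n`, i.e. `E(φ(I_A, X)) = E(φ̄(I_A))` where `φ̄(x) := E(φ(x, X))`. -/
def CondSLExp.IndepOf (S : CondSLExp Ω) (X : Ω → ℝ) (n : ℕ) : Prop :=
  ∀ A : Set Ω, MeasurableSet[S.F n] A → ∀ φ : ℝ → ℝ → ℝ,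
    (fun ω => φ (A.indicator (fun _ => (1 : ℝ)) ω) (X ω)) ∈ S.H →
    (∀ x : ℝ, (fun ω => φ x (X ω)) ∈ S.H) →
    (fun ω => S.E fun ω' => φ (A.indicator (fun _ => (1 : ℝ)) ω) (X ω')) ∈ S.H →
    S.E (fun ω => φ (A.indicator (fun _ => (1 : ℝ)) ω) (X ω)) =
      S.E (fun ω => S.E fun ω' => φ (A.indicator (fun _ => (1 : ℝ)) ω) (X ω'))

/-- Membership in `L_b¹`, via the characterization
`L_b¹ = {X ∈ L¹ : lim_n E(|X| I_{|X|>n}) = 0}`. -/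
def CondSLExp.InLb1 (S : CondSLExp Ω) (X : Ω → ℝ) : Prop :=
  Tendsto (fun n : ℕ => S.E fun ω => if (n : ℝ) < |X ω| then |X ω| else 0)
    atTop (nhds 0)

/-! Fix `ω` and let `x₀ := E_t X (ω)`. A convex `φ` has a supporting line `φ x₀ + a (y - x₀)` at
`x₀`, so `φ ∘ X ≥ a X + b` with the constants `a` and `b := φ x₀ - a x₀`. Constants pass through
`E_t`, and `E_t (a X) ≥ a E_t X` for every real `a` (for `a < 0` by positive homogeneity and
`E_t (-X) ≥ -E_t X`), hence `E_t (φ ∘ X) (ω) ≥ a x₀ + b = φ x₀`. -/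

lemma ConvexOn.add_rightDeriv_mul_sub_le {S : Set ℝ} {f : ℝ → ℝ} (hf : ConvexOn ℝ S f)
    {x y : ℝ} (hx : x ∈ interior S) (hy : y ∈ S) :
    f x + derivWithin f (Ioi x) x * (y - x) ≤ f y := by
  rcases lt_trichotomy y x with hyx | rfl | hxy
  · have h := (hf.slope_le_leftDeriv_of_mem_interior hy hx hyx).trans
      (hf.leftDeriv_le_rightDeriv_of_mem_interior hx)
    rw [slope_def_field, div_le_iff₀ (sub_pos.2 hyx)] at h
    linarith
  · simp
  · have h := hf.rightDeriv_le_slope_of_mem_interior hx hy hxy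
    rw [slope_def_field, le_div_iff₀ (sub_pos.2 hxy)] at h
    linarith

namespace CondSLExp

variable (S : CondSLExp Ω) {t : ℕ} {X : Ω → ℝ}

lemma neg_mem (hX : X ∈ S.H) : (fun ω => -X ω) ∈ S.H := by
  have h := S.smul_mem (-1) X hX
  rwa [neg_one_smul] at h

lemma const_mul_mem (a : ℝ) (hX : X ∈ S.H) : (fun ω => a * X ω) ∈ S.H :=
  S.smul_mem a X hX

lemma add_const_mem (hX : X ∈ S.H) (c : ℝ) : (fun ω => X ω + c) ∈ S.H :=
  S.add_mem X hX _ (S.const_mem c)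

lemma Et_const (t : ℕ) (c : ℝ) : S.Et t (fun _ => c) = fun _ => c :=
  S.proj t _ (S.const_mem c) measurable_const

lemma Et_add_const (hX : X ∈ S.H) (c : ℝ) (ω : Ω) :
    S.Et t (fun ω' => X ω' + c) ω = S.Et t X ω + c := by
  have hle := S.subadd t X hX _ (S.const_mem c) ω
  have hge := S.subadd t _ (S.add_const_mem hX c) _ (S.const_mem (-c)) ω
  simp only [Et_const] at hle hge
  have hcancel : ((fun ω' => X ω' + c) + fun _ => -c) = X := by
    ext ω'
    simp
  rw [hcancel] at hge
  exact le_antisymm hle (by linarith)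

lemma neg_Et_le_Et_neg (hX : X ∈ S.H) (ω : Ω) : -S.Et t X ω ≤ S.Et t (fun ω' => -X ω') ω := by
  have h := S.subadd t X hX _ (S.neg_mem hX) ω
  have hcancel : (X + fun ω' => -X ω') = fun _ => 0 := by
    ext ω'
    simp
  rw [hcancel, Et_const] at h
  linarith

lemma mul_Et_le_Et_const_mul (a : ℝ) (hX : X ∈ S.H) (ω : Ω) :
    a * S.Et t X ω ≤ S.Et t (fun ω' => a * X ω') ω := by
  rw [S.poshom t (fun _ => a) (S.const_mem a) measurable_const X hX (S.const_mul_mem a hX) ω]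
  rcases le_or_gt 0 a with ha | ha
  · simp [ha]
  · rw [max_eq_right ha.le, max_eq_left (neg_nonneg.2 ha.le)]
    nlinarith [S.neg_Et_le_Et_neg (t := t) hX ω]

end CondSLExp

/-- Jensen's inequality for conditional sublinear expectations: for any
convex `φ : ℝ → ℝ` and any `t`, if `X` and `φ(X)` are both in `H`, then
`E_t(φ(X)) ≥ φ(E_t(X))`. -/
theorem condSLExp_jensen (S : CondSLExp Ω) (φ : ℝ → ℝ) (hφ : ConvexOn ℝ Set.univ φ)
    (t : ℕ) (X : Ω → ℝ) (hX : X ∈ S.H) (hφX : (fun ω => φ (X ω)) ∈ S.H) :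
    ∀ ω, φ (S.Et t X ω) ≤ S.Et t (fun ω' => φ (X ω')) ω := by
  intro ω
  set x₀ := S.Et t X ω
  set a := derivWithin φ (Ioi x₀) x₀
  have hsupport (y : ℝ) : φ x₀ + a * (y - x₀) ≤ φ y :=
    hφ.add_rightDeriv_mul_sub_le (by simp) (mem_univ y)
  calc φ x₀ = a * x₀ + (φ x₀ - a * x₀) := by ring
    _ ≤ S.Et t (fun ω' => a * X ω') ω + (φ x₀ - a * x₀) := by
      gcongr
      exact S.mul_Et_le_Et_const_mul a hX ω
    _ = S.Et t (fun ω' => a * X ω' + (φ x₀ - a * x₀)) ω :=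
      (S.Et_add_const (S.const_mul_mem a hX) _ ω).symm
    _ ≤ S.Et t (fun ω' => φ (X ω')) ω :=
      S.mono t _ (S.add_const_mem (S.const_mul_mem a hX) _) _ hφX
        (fun ω' => by linarith [hsupport (X ω')]) ω
end

section
/- A subset K of L¹ is uniformly integrable under a sublinear expectation E if and only if (i) {E(|X|) : X ∈ K} is bounded, and (ii) for every ε > 0 there is δ > 0 such that for all measurable A with E(I_A) ≤ δ, one has E(I_A|X|) < ε for all X ∈ K. -/
open MeasureTheory Filter Set

/-- A sublinear expectation `E` on a linear space `H` of real-valued functions on `Ω`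
containing the constants and closed under `|·|`, satisfying monotonicity,
constant preserving, sub-additivity and positive homogeneity. -/
structure SublinearExp (Ω : Type*) where
  H : Set (Ω → ℝ)
  E : (Ω → ℝ) → ℝ
  const_mem : ∀ c : ℝ, (fun _ => c) ∈ H
  abs_mem : ∀ X ∈ H, (fun ω => |X ω|) ∈ H
  add_mem : ∀ X ∈ H, ∀ Y ∈ H, X + Y ∈ H
  smul_mem : ∀ (c : ℝ), ∀ X ∈ H, c • X ∈ H
  mono : ∀ X ∈ H, ∀ Y ∈ H, (∀ ω, X ω ≤ Y ω) → E X ≤ E Y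
  const : ∀ c : ℝ, E (fun _ => c) = c
  subadd : ∀ X ∈ H, ∀ Y ∈ H, E (X + Y) ≤ E X + E Y
  poshom : ∀ (c : ℝ), 0 ≤ c → ∀ X ∈ H, E (c • X) = c * E X

/-- `K` is uniformly integrable w.r.t. `E`: `E(I_{|X|≥c}·|X|) → 0` as `c → ∞`,
uniformly in `X ∈ K`. -/
def SublinearExp.UnifInt {Ω : Type*} (S : SublinearExp Ω) (K : Set (Ω → ℝ)) : Prop :=
  ∀ ε > (0 : ℝ), ∃ c₀ : ℝ, ∀ c ≥ c₀, ∀ X ∈ K,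
    S.E (fun ω => if c ≤ |X ω| then |X ω| else 0) < ε

/-!
Write `T_c X := I_{c ≤ |X|} |X|` for the tail of `X` above level `c`. Pointwise
`I_A |X| ≤ T_c X + c I_A`, so by sublinearity `E(I_A |X|) ≤ E(T_c X) + c E(I_A)`; with `A = Ω`
this bounds `E|X|`, and with `E(I_A)` small it gives uniform absolute continuity. Conversely,
Markov's inequality `c E(I_{c ≤ |X|}) ≤ E|X| ≤ M` makes `E(I_{c ≤ |X|})` small for large `c`,
and uniform absolute continuity applied to `A = {c ≤ |X|}` makes the tails small.
-/

namespace SublinearExp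

variable {Ω : Type*} {S : SublinearExp Ω}

lemma ite_le_abs_eq_indicator (X : Ω → ℝ) (c : ℝ) :
    (fun ω => if c ≤ |X ω| then |X ω| else 0) = {ω | c ≤ |X ω|}.indicator fun ω => |X ω| := by
  ext ω
  simp [Set.indicator_apply]

lemma E_le_E_add_E {Y Z W : Ω → ℝ} (hY : Y ∈ S.H) (hZ : Z ∈ S.H) (hW : W ∈ S.H)
    (h : ∀ ω, Y ω ≤ Z ω + W ω) : S.E Y ≤ S.E Z + S.E W :=
  (S.mono _ hY _ (S.add_mem _ hZ _ hW) h).trans (S.subadd _ hZ _ hW)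

variable [MeasurableSpace Ω]

lemma tail_mem (hind : ∀ A : Set Ω, MeasurableSet A → ∀ X ∈ S.H, A.indicator X ∈ S.H)
    {X : Ω → ℝ} (hX : X ∈ S.H) (hXm : Measurable X) (c : ℝ) :
    (fun ω => if c ≤ |X ω| then |X ω| else 0) ∈ S.H := by
  rw [ite_le_abs_eq_indicator]
  exact hind _ (measurableSet_le measurable_const hXm.abs) _ (S.abs_mem X hX)

lemma E_indicator_abs_le (hind : ∀ A : Set Ω, MeasurableSet A → ∀ X ∈ S.H, A.indicator X ∈ S.H)
    {X : Ω → ℝ} (hX : X ∈ S.H) (hXm : Measurable X) {A : Set Ω} (hA : MeasurableSet A)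
    {c : ℝ} (hc : 0 ≤ c) :
    S.E (A.indicator fun ω => |X ω|) ≤
      S.E (fun ω => if c ≤ |X ω| then |X ω| else 0) + c * S.E (A.indicator fun _ => 1) := by
  have hI : A.indicator (fun _ => (1 : ℝ)) ∈ S.H := hind A hA _ (S.const_mem 1)
  rw [← S.poshom c hc _ hI]
  refine E_le_E_add_E (hind A hA _ (S.abs_mem X hX)) (tail_mem hind hX hXm c)
    (S.smul_mem c _ hI) fun ω => ?_
  by_cases hω : ω ∈ A
  · by_cases hcX : c ≤ |X ω|
    · simp [hω, hcX, hc]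
    · simp only [hω, indicator_of_mem, hcX, ↓reduceIte, Pi.smul_apply, smul_eq_mul, mul_one,
        zero_add]
      linarith
  · simp only [hω, not_false_eq_true, indicator_of_notMem, Pi.smul_apply, smul_eq_mul, mul_zero,
      add_zero]
    positivity

lemma mul_E_indicator_le_E_abs
    (hind : ∀ A : Set Ω, MeasurableSet A → ∀ X ∈ S.H, A.indicator X ∈ S.H)
    {X : Ω → ℝ} (hX : X ∈ S.H) (hXm : Measurable X) {c : ℝ} (hc : 0 ≤ c) :
    c * S.E ({ω | c ≤ |X ω|}.indicator fun _ => 1) ≤ S.E fun ω => |X ω| := by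
  have hI : {ω | c ≤ |X ω|}.indicator (fun _ => (1 : ℝ)) ∈ S.H :=
    hind _ (measurableSet_le measurable_const hXm.abs) _ (S.const_mem 1)
  rw [← S.poshom c hc _ hI]
  refine S.mono _ (S.smul_mem c _ hI) _ (S.abs_mem X hX) fun ω => ?_
  by_cases hω : c ≤ |X ω| <;> simp [hω]

lemma UnifInt.exists_bound
    (hind : ∀ A : Set Ω, MeasurableSet A → ∀ X ∈ S.H, A.indicator X ∈ S.H)
    {K : Set (Ω → ℝ)} (hK : K ⊆ S.H) (hKm : ∀ X ∈ K, Measurable X) (hUI : S.UnifInt K) :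
    ∃ M : ℝ, ∀ X ∈ K, S.E (fun ω => |X ω|) ≤ M := by
  obtain ⟨c₀, hc₀⟩ := hUI 1 one_pos
  set c := max c₀ 0
  refine ⟨1 + c, fun X hX => ?_⟩
  have h := E_indicator_abs_le hind (hK hX) (hKm X hX) MeasurableSet.univ (le_max_right c₀ 0)
  simp only [Set.indicator_univ, S.const, mul_one] at h
  linarith [hc₀ c (le_max_left _ _) X hX]

lemma UnifInt.uniformly_absolutelyContinuous
    (hind : ∀ A : Set Ω, MeasurableSet A → ∀ X ∈ S.H, A.indicator X ∈ S.H)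
    {K : Set (Ω → ℝ)} (hK : K ⊆ S.H) (hKm : ∀ X ∈ K, Measurable X) (hUI : S.UnifInt K) :
    ∀ ε > (0 : ℝ), ∃ δ > (0 : ℝ), ∀ A : Set Ω, MeasurableSet A →
      S.E (A.indicator fun _ => (1 : ℝ)) ≤ δ →
      ∀ X ∈ K, S.E (A.indicator fun ω => |X ω|) < ε := by
  intro ε hε
  obtain ⟨c₀, hc₀⟩ := hUI (ε / 2) (half_pos hε)
  set c := max c₀ 1
  have hc : 0 < c := one_pos.trans_le (le_max_right _ _)
  refine ⟨ε / (2 * c), by positivity, fun A hA hAδ X hX => ?_⟩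
  calc S.E (A.indicator fun ω => |X ω|)
      ≤ S.E (fun ω => if c ≤ |X ω| then |X ω| else 0) + c * S.E (A.indicator fun _ => 1) :=
        E_indicator_abs_le hind (hK hX) (hKm X hX) hA hc.le
    _ < ε / 2 + c * (ε / (2 * c)) := add_lt_add_of_lt_of_le (hc₀ c (le_max_left _ _) X hX)
        (mul_le_mul_of_nonneg_left hAδ hc.le)
    _ = ε := by field_simp; ring

lemma unifInt_of_bound_of_uniformly_absolutelyContinuous
    (hind : ∀ A : Set Ω, MeasurableSet A → ∀ X ∈ S.H, A.indicator X ∈ S.H)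
    {K : Set (Ω → ℝ)} (hK : K ⊆ S.H) (hKm : ∀ X ∈ K, Measurable X)
    {M : ℝ} (hM : ∀ X ∈ K, S.E (fun ω => |X ω|) ≤ M)
    (hAC : ∀ ε > (0 : ℝ), ∃ δ > (0 : ℝ), ∀ A : Set Ω, MeasurableSet A →
      S.E (A.indicator fun _ => (1 : ℝ)) ≤ δ →
      ∀ X ∈ K, S.E (A.indicator fun ω => |X ω|) < ε) :
    S.UnifInt K := by
  intro ε hε
  obtain ⟨δ, hδ, hδε⟩ := hAC ε hε
  refine ⟨max (M / δ) 1, fun c hc X hX => ?_⟩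
  have hc0 : 0 < c := one_pos.trans_le ((le_max_right _ _).trans hc)
  have hMc : M ≤ c * δ := (div_le_iff₀ hδ).1 ((le_max_left _ _).trans hc)
  have hsmall : S.E ({ω | c ≤ |X ω|}.indicator fun _ => 1) ≤ δ :=
    le_of_mul_le_mul_left
      (((mul_E_indicator_le_E_abs hind (hK hX) (hKm X hX) hc0.le).trans (hM X hX)).trans hMc) hc0
  rw [ite_le_abs_eq_indicator]
  exact hδε _ (measurableSet_le measurable_const (hKm X hX).abs) hsmall X hX

end SublinearExp

theorem unifInt_iff_general {Ω : Type*} [MeasurableSpace Ω] (S : SublinearExp Ω)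
    (hmeas : ∀ X ∈ S.H, Measurable X)
    (hind : ∀ (A : Set Ω), MeasurableSet A → ∀ X ∈ S.H, A.indicator X ∈ S.H)
    (K : Set (Ω → ℝ)) (hK : K ⊆ S.H) :
    S.UnifInt K ↔
      (∃ M : ℝ, ∀ X ∈ K, S.E (fun ω => |X ω|) ≤ M) ∧
      (∀ ε > (0 : ℝ), ∃ δ > (0 : ℝ), ∀ A : Set Ω, MeasurableSet A →
        S.E (A.indicator fun _ => (1 : ℝ)) ≤ δ →
        ∀ X ∈ K, S.E (A.indicator fun ω => |X ω|) < ε) := by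
  have hKm : ∀ X ∈ K, Measurable X := fun X hX => hmeas X (hK hX)
  refine ⟨fun hUI => ⟨hUI.exists_bound hind hK hKm,
    hUI.uniformly_absolutelyContinuous hind hK hKm⟩, ?_⟩
  rintro ⟨⟨M, hM⟩, hAC⟩
  exact SublinearExp.unifInt_of_bound_of_uniformly_absolutelyContinuous hind hK hKm hM hAC

/-- for a sublinear expectation with the monotone continuity (Fatou)
property, `K ⊆ L¹` is uniformly integrable iff (i) `{E(|X|) : X ∈ K}` is bounded and
(ii) for every `ε > 0` there is `δ > 0` such that `E(I_A) ≤ δ` implies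
`E(I_A |X|) < ε` for all `X ∈ K`. -/
theorem unifInt_iff {Ω : Type*} [MeasurableSpace Ω] (S : SublinearExp Ω)
    (hmeas : ∀ X ∈ S.H, Measurable X)
    (hind : ∀ (A : Set Ω), MeasurableSet A → ∀ X ∈ S.H, A.indicator X ∈ S.H)
    (hfatou : ∀ X : ℕ → Ω → ℝ, (∀ i, X i ∈ S.H) → (∀ ω, Antitone fun i => X i ω) →
      (∀ ω, Filter.Tendsto (fun i => X i ω) Filter.atTop (nhds 0)) →
      Filter.Tendsto (fun i => S.E (X i)) Filter.atTop (nhds 0))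
    (K : Set (Ω → ℝ)) (hK : K ⊆ S.H) :
    S.UnifInt K ↔
      (∃ M : ℝ, ∀ X ∈ K, S.E (fun ω => |X ω|) ≤ M) ∧
      (∀ ε > (0 : ℝ), ∃ δ > (0 : ℝ), ∀ A : Set Ω, MeasurableSet A →
        S.E (A.indicator fun _ => (1 : ℝ)) ≤ δ →
        ∀ X ∈ K, S.E (A.indicator fun ω => |X ω|) < ε) :=
  unifInt_iff_general S hmeas hind K hK
end

section
/- Doob's maximal inequality for SL-submartingales, part (i): if (X_j, F_j)_{j=1}^n is an SL-submartingale, then for every λ > 0, λ·V(max_{1≤j≤n} X_j ≥ λ) ≤ E(I_{{max_{1≤j≤n} X_j ≥ λ}} X_n) ≤ E(X_n⁺) ≤ E(|X_n|), where V(A) := E(I_A). -/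
open MeasureTheory Filter Set

variable {Ω : Type*} [MeasurableSpace Ω]

/-! Let `τ` be the first time in `[1, n]` at which `X` reaches `λ` and `A` the event that this
happens. Then `λ I_A ≤ I_A X_τ`, and it remains to show `E(I_A X_τ) ≤ E(I_A X_n)`. As `E` is only
sublinear, this optional sampling step goes by backward induction on `Y_k := I_A X_{τ ∨ k}`:
`Y_k` is `X_k` on the `F_k`-event `A ∩ {τ ≤ k}` and `Y_{k+1}` off it, while `Y_{k+1} = X_{k+1}` on
that event, so locality of `E_k` and `X_k ≤ E_k X_{k+1}` give `E(Y_k) ≤ E(Y_{k+1})`. -/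

theorem indicator_comp_max_eq_piecewise {α : Type*} (X : ℕ → α → ℝ) (τ : α → ℕ) (A : Set α)
    (k : ℕ) [DecidablePred (· ∈ A ∩ {ω | τ ω ≤ k})] :
    (A.indicator fun ω => X (max (τ ω) k) ω) =
      (A ∩ {ω | τ ω ≤ k}).piecewise (X k) (A.indicator fun ω => X (max (τ ω) (k + 1)) ω) := by
  funext ω
  by_cases hA : ω ∈ A
  · by_cases hτ : τ ω ≤ k
    · simp [hA, hτ]
    · have hτ' : k + 1 ≤ τ ω := Nat.lt_of_not_le hτ
      simp [hA, hτ, hτ', Nat.le_of_succ_le hτ']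
  · simp [hA]

theorem measurableSet_exists_mem_Icc_le {α : Type*} {F : ℕ → MeasurableSpace α}
    (hF : Monotone F) {X : ℕ → α → ℝ} (hX : ∀ j, Measurable[F j] (X j)) (a k : ℕ) (lam : ℝ) :
    MeasurableSet[F k] {ω | ∃ j, a ≤ j ∧ j ≤ k ∧ lam ≤ X j ω} := by
  have h : {ω | ∃ j, a ≤ j ∧ j ≤ k ∧ lam ≤ X j ω} =
      ⋃ j, ⋃ (_ : a ≤ j ∧ j ≤ k), X j ⁻¹' Ici lam := by
    ext ω; simp [and_assoc]
  rw [h]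
  exact MeasurableSet.iUnion fun j => MeasurableSet.iUnion fun hj =>
    hF hj.2 _ (hX j measurableSet_Ici)

theorem setOf_exists_inter_hittingBtwn_le {α : Type*} (X : ℕ → α → ℝ) (lam : ℝ) (a n k : ℕ) :
    {ω | ∃ j, a ≤ j ∧ j ≤ n ∧ lam ≤ X j ω} ∩ {ω | hittingBtwn X (Ici lam) a n ω ≤ k} =
      {ω | ∃ j, a ≤ j ∧ j ≤ min k n ∧ lam ≤ X j ω} := by
  ext ω
  simp only [mem_inter_iff, mem_ofPred_eq, le_min_iff]
  constructor
  · rintro ⟨⟨j, haj, hjn, hj⟩, hτk⟩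
    have hhit : ∃ j ∈ Icc a n, X j ω ∈ Ici lam := ⟨j, ⟨haj, hjn⟩, hj⟩
    exact ⟨_, le_hittingBtwn_of_exists hhit, ⟨hτk, hittingBtwn_le ω⟩, hittingBtwn_mem_set hhit⟩
  · rintro ⟨j, haj, ⟨hjk, hjn⟩, hj⟩
    exact ⟨⟨j, haj, hjn, hj⟩, (hittingBtwn_le_of_mem haj hjn hj).trans hjk⟩

namespace CondSLExp

variable (S : CondSLExp Ω)

theorem E_zero : S.E 0 = 0 :=
  tendsto_const_nhds_iff.mp <|
    S.fatou (fun _ => 0) (fun _ => S.const_mem 0) (fun _ => antitone_const)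
      (fun _ => tendsto_const_nhds)

theorem E_mono {X Y : Ω → ℝ} (hX : X ∈ S.H) (hY : Y ∈ S.H) (hXY : ∀ ω, X ω ≤ Y ω) :
    S.E X ≤ S.E Y := by
  rcases isEmpty_or_nonempty Ω with hΩ | ⟨⟨ω⟩⟩
  · rw [Subsingleton.elim X Y]
  · simpa only [S.E0_eq X hX ω, S.E0_eq Y hY ω] using S.mono 0 X hX Y hY hXY ω

theorem E_Et (t : ℕ) {Y : Ω → ℝ} (hY : Y ∈ S.H) : S.E (S.Et t Y) = S.E Y := by
  rcases isEmpty_or_nonempty Ω with hΩ | ⟨⟨ω⟩⟩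
  · rw [Subsingleton.elim (S.Et t Y) Y]
  · rw [← S.E0_eq _ (S.Et_mem t Y hY) ω, ← S.E0_eq Y hY ω, S.tower 0 t t.zero_le Y hY]

theorem E_const_mul {c : ℝ} (hc : 0 ≤ c) {Y : Ω → ℝ} (hY : Y ∈ S.H) :
    S.E (fun ω => c * Y ω) = c * S.E Y := by
  rcases isEmpty_or_nonempty Ω with hΩ | ⟨⟨ω⟩⟩
  · have h (f : Ω → ℝ) : f = 0 := Subsingleton.elim f 0
    rw [h (fun ω => c * Y ω), h Y, E_zero, mul_zero]
  · have hcY : (fun ω => c * Y ω) ∈ S.H := S.smul_mem c Y hY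
    have h := S.poshom 0 (fun _ => c) (S.const_mem c) measurable_const Y hY hcY ω
    rw [S.E0_eq _ hcY ω, S.E0_eq Y hY ω, max_eq_left hc, max_eq_right (neg_nonpos.mpr hc),
      zero_mul, add_zero] at h
    exact h

theorem piecewise_mem {D : Set Ω} [DecidablePred (· ∈ D)] (hD : MeasurableSet D)
    {U V : Ω → ℝ} (hU : U ∈ S.H) (hV : V ∈ S.H) : D.piecewise U V ∈ S.H := by
  rw [← indicator_add_compl_eq_piecewise]
  exact S.add_mem _ (S.indmul_mem D hD U hU) _ (S.indmul_mem Dᶜ hD.compl V hV)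

theorem posPart_mem {X : Ω → ℝ} (hX : X ∈ S.H) : (fun ω => max (X ω) 0) ∈ S.H := by
  have h : (fun ω => max (X ω) 0) = (2⁻¹ : ℝ) • (X + fun ω => |X ω|) := by
    funext ω
    rcases le_total (X ω) 0 with hω | hω
    · simp [max_eq_right hω, abs_of_nonpos hω]
    · simp [max_eq_left hω, abs_of_nonneg hω]; ring
  rw [h]
  exact S.smul_mem _ _ (S.add_mem X hX _ (S.abs_mem X hX))

theorem Et_eqOn {t : ℕ} {D : Set Ω} (hD : MeasurableSet[S.F t] D) {Y Z : Ω → ℝ}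
    (hY : Y ∈ S.H) (hZ : Z ∈ S.H) (hYZ : EqOn Y Z D) : EqOn (S.Et t Y) (S.Et t Z) D := by
  intro ω hω
  calc S.Et t Y ω = D.indicator (S.Et t Y) ω := (indicator_of_mem hω _).symm
    _ = S.Et t (D.indicator Y) ω := by rw [S.locality t D hD Y hY]
    _ = S.Et t (D.indicator Z) ω := by rw [indicator_congr hYZ]
    _ = D.indicator (S.Et t Z) ω := by rw [S.locality t D hD Z hZ]
    _ = S.Et t Z ω := indicator_of_mem hω _

theorem E_piecewise_le {t : ℕ} {D : Set Ω} [DecidablePred (· ∈ D)]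
    (hD : MeasurableSet[S.F t] D) {U V Z : Ω → ℝ} (hU : U ∈ S.H) (hUt : Measurable[S.F t] U)
    (hV : V ∈ S.H) (hZ : Z ∈ S.H) (hUV : ∀ ω ∈ D, U ω ≤ S.Et t V ω) :
    S.E (D.piecewise U Z) ≤ S.E (D.piecewise V Z) := by
  have hDm := S.F_le t D hD
  have hUZ := S.piecewise_mem hDm hU hZ
  have hVZ := S.piecewise_mem hDm hV hZ
  rw [← S.E_Et t hUZ, ← S.E_Et t hVZ]
  refine S.E_mono (S.Et_mem t _ hUZ) (S.Et_mem t _ hVZ) fun ω => ?_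
  by_cases hω : ω ∈ D
  · rw [S.Et_eqOn hD hUZ hU (piecewise_eqOn ..) hω, S.proj t U hU hUt,
      S.Et_eqOn hD hVZ hV (piecewise_eqOn ..) hω]
    exact hUV ω hω
  · rw [S.Et_eqOn hD.compl hUZ hZ (piecewise_eqOn_compl ..) hω,
      S.Et_eqOn hD.compl hVZ hZ (piecewise_eqOn_compl ..) hω]

variable {X : ℕ → Ω → ℝ} {τ : Ω → ℕ} {A : Set Ω} {n : ℕ}

theorem indicator_comp_max_mem (hmem : ∀ j, X j ∈ S.H) (hτn : ∀ ω, τ ω ≤ n)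
    (hA : ∀ k, MeasurableSet[S.F k] (A ∩ {ω | τ ω ≤ k})) {k : ℕ} (hk : k ≤ n) :
    (A.indicator fun ω => X (max (τ ω) k) ω) ∈ S.H := by
  classical
  induction hk using Nat.decreasingInduction with
  | self =>
    have hAm : MeasurableSet A := by
      have hA_eq : A ∩ {ω | τ ω ≤ n} = A := inter_eq_left.mpr fun ω _ => hτn ω
      exact hA_eq ▸ S.F_le n _ (hA n)
    simpa only [max_eq_right (hτn _)] using S.indmul_mem A hAm _ (hmem n)
  | of_succ k _ ih =>
    rw [indicator_comp_max_eq_piecewise]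
    exact S.piecewise_mem (S.F_le k _ (hA k)) (hmem k) ih

theorem E_indicator_comp_max_le_succ (hmem : ∀ j, X j ∈ S.H)
    (hadapt : ∀ j, Measurable[S.F j] (X j))
    (hstep : ∀ k, 1 ≤ k → k < n → ∀ ω, X k ω ≤ S.Et k (X (k + 1)) ω)
    (hτ1 : ∀ ω ∈ A, 1 ≤ τ ω) (hτn : ∀ ω, τ ω ≤ n)
    (hA : ∀ k, MeasurableSet[S.F k] (A ∩ {ω | τ ω ≤ k})) {k : ℕ} (hk : k < n) :
    S.E (A.indicator fun ω => X (max (τ ω) k) ω) ≤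
      S.E (A.indicator fun ω => X (max (τ ω) (k + 1)) ω) := by
  classical
  set Y := A.indicator fun ω => X (max (τ ω) (k + 1)) ω
  have hY : (A ∩ {ω | τ ω ≤ k}).piecewise (X (k + 1)) Y = Y := by
    funext ω
    by_cases hω : ω ∈ A ∩ {ω | τ ω ≤ k}
    · rw [piecewise_eq_of_mem _ _ _ hω]
      simp [Y, hω.1, max_eq_right (Nat.le_succ_of_le hω.2)]
    · simp [hω]
  calc S.E (A.indicator fun ω => X (max (τ ω) k) ω)
      = S.E ((A ∩ {ω | τ ω ≤ k}).piecewise (X k) Y) := by rw [indicator_comp_max_eq_piecewise]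
    _ ≤ S.E ((A ∩ {ω | τ ω ≤ k}).piecewise (X (k + 1)) Y) :=
      S.E_piecewise_le (hA k) (hmem k) (hadapt k) (hmem (k + 1))
        (S.indicator_comp_max_mem hmem hτn hA hk) fun ω hω =>
          hstep k ((hτ1 ω hω.1).trans hω.2) hk ω
    _ = S.E Y := by rw [hY]

theorem E_indicator_stoppedValue_le (hmem : ∀ j, X j ∈ S.H)
    (hadapt : ∀ j, Measurable[S.F j] (X j))
    (hstep : ∀ k, 1 ≤ k → k < n → ∀ ω, X k ω ≤ S.Et k (X (k + 1)) ω)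
    (hτ1 : ∀ ω ∈ A, 1 ≤ τ ω) (hτn : ∀ ω, τ ω ≤ n)
    (hA : ∀ k, MeasurableSet[S.F k] (A ∩ {ω | τ ω ≤ k})) :
    S.E (A.indicator fun ω => X (τ ω) ω) ≤ S.E (A.indicator (X n)) := by
  have h : ∀ k ≤ n, S.E (A.indicator fun ω => X (max (τ ω) k) ω) ≤ S.E (A.indicator (X n)) := by
    intro k hk
    induction hk using Nat.decreasingInduction with
    | self => simp only [max_eq_right (hτn _)]; rfl
    | of_succ k hk ih =>
      exact (S.E_indicator_comp_max_le_succ hmem hadapt hstep hτ1 hτn hA hk).trans ih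
  simpa using h 0 n.zero_le

end CondSLExp

theorem doob_submartingale_max_general (S : CondSLExp Ω) (n : ℕ)
    (X : ℕ → Ω → ℝ) (hmem : ∀ j, X j ∈ S.H)
    (hadapt : ∀ j, Measurable[S.F j] (X j))
    (hsub : ∀ s t : ℕ, 1 ≤ s → s ≤ t → t ≤ n → ∀ ω, X s ω ≤ S.Et s (X t) ω)
    (lam : ℝ) (hlam : 0 < lam) :
    lam * S.V {ω | ∃ j, 1 ≤ j ∧ j ≤ n ∧ lam ≤ X j ω} ≤
        S.E ({ω | ∃ j, 1 ≤ j ∧ j ≤ n ∧ lam ≤ X j ω}.indicator (X n)) ∧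
      S.E ({ω | ∃ j, 1 ≤ j ∧ j ≤ n ∧ lam ≤ X j ω}.indicator (X n)) ≤
        S.E (fun ω => max (X n ω) 0) ∧
      S.E (fun ω => max (X n ω) 0) ≤ S.E (fun ω => |X n ω|) := by
  set A := {ω | ∃ j, 1 ≤ j ∧ j ≤ n ∧ lam ≤ X j ω}
  set τ := hittingBtwn X (Ici lam) 1 n
  have hAm : MeasurableSet A :=
    S.F_le n _ (measurableSet_exists_mem_Icc_le S.F_mono hadapt 1 n lam)
  have hAτ : ∀ k, MeasurableSet[S.F k] (A ∩ {ω | τ ω ≤ k}) := fun k => by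
    rw [setOf_exists_inter_hittingBtwn_le]
    exact S.F_mono (min_le_left k n) _ (measurableSet_exists_mem_Icc_le S.F_mono hadapt 1 _ lam)
  have hτ1 : ∀ ω ∈ A, 1 ≤ τ ω := fun ω ⟨j, hj1, hjn, hj⟩ =>
    le_hittingBtwn_of_exists ⟨j, ⟨hj1, hjn⟩, hj⟩
  have hτA : ∀ ω ∈ A, lam ≤ X (τ ω) ω := fun ω ⟨j, hj1, hjn, hj⟩ =>
    hittingBtwn_mem_set ⟨j, ⟨hj1, hjn⟩, hj⟩
  have hXτ : (A.indicator fun ω => X (τ ω) ω) ∈ S.H := by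
    simpa using S.indicator_comp_max_mem hmem hittingBtwn_le hAτ n.zero_le
  have hIA : (A.indicator fun _ => (1 : ℝ)) ∈ S.H := S.indmul_mem A hAm _ (S.const_mem 1)
  have hXpos := S.posPart_mem (hmem n)
  refine ⟨?_, S.E_mono (S.indmul_mem A hAm _ (hmem n)) hXpos fun ω => ?_,
    S.E_mono hXpos (S.abs_mem _ (hmem n)) fun ω => max_le (le_abs_self _) (abs_nonneg _)⟩
  · calc lam * S.V A = S.E fun ω => lam * A.indicator (fun _ => (1 : ℝ)) ω :=
          (S.E_const_mul hlam.le hIA).symm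
      _ ≤ S.E (A.indicator fun ω => X (τ ω) ω) :=
        S.E_mono (S.smul_mem lam _ hIA) hXτ fun ω => by
          by_cases hω : ω ∈ A
          · simpa [hω] using hτA ω hω
          · simp [hω]
      _ ≤ S.E (A.indicator (X n)) :=
        S.E_indicator_stoppedValue_le hmem hadapt
          (fun k hk hkn => hsub k (k + 1) hk k.le_succ hkn) hτ1 hittingBtwn_le hAτ
  · by_cases hω : ω ∈ A <;> simp [hω]

/-- Doob's maximal inequality for `SL`-submartingales, part (i): if
`(X_j, F_j)_{j=1}^n` is an `SL`-submartingale, then for every `λ > 0`, with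
`A = {max_{1≤j≤n} X_j ≥ λ}`,
`λ·V(A) ≤ E(I_A X_n) ≤ E(X_n⁺) ≤ E(|X_n|)`. -/
theorem doob_submartingale_max (S : CondSLExp Ω) (n : ℕ) (hn : 1 ≤ n)
    (X : ℕ → Ω → ℝ) (hmem : ∀ j, X j ∈ S.H)
    (hadapt : ∀ j, Measurable[S.F j] (X j))
    (hsub : ∀ s t : ℕ, 1 ≤ s → s ≤ t → t ≤ n → ∀ ω, X s ω ≤ S.Et s (X t) ω)
    (lam : ℝ) (hlam : 0 < lam) :
    lam * S.V {ω | ∃ j, 1 ≤ j ∧ j ≤ n ∧ lam ≤ X j ω} ≤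
        S.E ({ω | ∃ j, 1 ≤ j ∧ j ≤ n ∧ lam ≤ X j ω}.indicator (X n)) ∧
      S.E ({ω | ∃ j, 1 ≤ j ∧ j ≤ n ∧ lam ≤ X j ω}.indicator (X n)) ≤
        S.E (fun ω => max (X n ω) 0) ∧
      S.E (fun ω => max (X n ω) 0) ≤ S.E (fun ω => |X n ω|) :=
  doob_submartingale_max_general S n X hmem hadapt hsub lam hlam
end
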